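/- arXiv:2304.01160 — 3 statements merged into one kernel-verified Lean document; each statement's English description precedes it below -/
import Mathlib

section
/- Let Ω ⊆ ℝⁿ be open, let L : ℝⁿ × ℝᵐ × (m×n real matrices) → ℝ be smooth, and let φ : ℝᵐ → ℝᵐ be a smooth infinitesimal symmetry of L in the sense that for all (x, y, q), Σ_k (∂L/∂y^k)(x,y,q)·φ^k(y) + Σ_{k,j} (∂L/∂q^k_j)(x,y,q)·Σ_l (∂φ^k/∂y^l)(y)·q^l_j = 0. If u : Ω → ℝᵐ is smooth and satisfies the Euler–Lagrange equations, i.e. for each k and all x ∈ Ω, (∂L/∂y^k)(x, u(x), Du(x)) = Σ_j ∂/∂x^j [ (∂L/∂q^k_j)(x, u(x), Du(x)) ], then the vector field V on Ω with components V^j(x) = Σ_k (∂L/∂q^k_j)(x, u(x), Du(x))·φ^k(u(x)) is divergence free: Σ_j ∂V^j/∂x^j = 0 on Ω. -/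
/-- Partial derivative of a scalar function on `ℝⁿ` in the `j`-th coordinate direction. -/
noncomputable def pderiv' {n : ℕ} (j : Fin n) (f : (Fin n → ℝ) → ℝ) (x : Fin n → ℝ) : ℝ :=
  fderiv ℝ f x (Pi.single j 1)

/-!
By the Leibniz rule, `div V = Σ_k φ^k(u) Σ_j ∂_j(∂L/∂q^k_j) + Σ_{k,j} ∂L/∂q^k_j ∂_j(φ^k ∘ u)`.
The Euler–Lagrange equations turn the first sum into `Σ_k ∂L/∂y^k φ^k(u)` and the chain rule
gives `∂_j(φ^k ∘ u) = Σ_l ∂_l φ^k(u) ∂_j u^l`, so `div V` is the left-hand side of the symmetry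
condition at the point `(x, u(x), Du(x))` of the jet space, which vanishes.
-/

open Filter Topology Finset

section PartialDerivative

variable {n : ℕ} {x : Fin n → ℝ} (j : Fin n)

theorem pderiv'_congr_of_eventuallyEq {f g : (Fin n → ℝ) → ℝ} (h : f =ᶠ[𝓝 x] g) :
    pderiv' j f x = pderiv' j g x := by
  rw [pderiv', pderiv', h.fderiv_eq]

theorem pderiv'_mul {f g : (Fin n → ℝ) → ℝ} (hf : DifferentiableAt ℝ f x)
    (hg : DifferentiableAt ℝ g x) :
    pderiv' j (fun y => f y * g y) x = f x * pderiv' j g x + g x * pderiv' j f x := by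
  simp only [pderiv', fderiv_fun_mul hf hg, add_apply, smul_apply, smul_eq_mul]

theorem pderiv'_sum {ι : Type*} (s : Finset ι) {f : ι → (Fin n → ℝ) → ℝ}
    (hf : ∀ i ∈ s, DifferentiableAt ℝ (f i) x) :
    pderiv' j (fun y => ∑ i ∈ s, f i y) x = ∑ i ∈ s, pderiv' j (f i) x := by
  simp only [pderiv', fderiv_fun_sum hf, _root_.sum_apply]

theorem pderiv'_comp_apply {m p : ℕ} {φ : (Fin m → ℝ) → Fin p → ℝ} {u : (Fin n → ℝ) → Fin m → ℝ}
    (hφ : DifferentiableAt ℝ φ (u x)) (hu : DifferentiableAt ℝ u x) (k : Fin p) :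
    pderiv' j (fun y => φ (u y) k) x =
      ∑ l, fderiv ℝ φ (u x) (Pi.single l 1) k * fderiv ℝ u x (Pi.single j 1) l := by
  have hchain : HasFDerivAt (fun y => φ (u y) k)
      ((ContinuousLinearMap.proj k).comp ((fderiv ℝ φ (u x)).comp (fderiv ℝ u x))) x :=
    (ContinuousLinearMap.proj (R := ℝ) (φ := fun _ : Fin p => ℝ) k).hasFDerivAt.comp x
      (hφ.hasFDerivAt.comp x hu.hasFDerivAt)
  rw [pderiv', hchain.fderiv]
  conv_lhs => rw [ContinuousLinearMap.comp_apply, ContinuousLinearMap.comp_apply,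
    pi_eq_sum_univ' (fderiv ℝ u x (Pi.single j 1)), map_sum]
  simp only [map_smul, ContinuousLinearMap.proj_apply, Finset.sum_apply, Pi.smul_apply,
    smul_eq_mul, mul_comm]

theorem sum_pderiv'_sum_mul {ι : Type*} [Fintype ι] {P : ι → Fin n → (Fin n → ℝ) → ℝ}
    {g : ι → (Fin n → ℝ) → ℝ} (hP : ∀ k j, DifferentiableAt ℝ (P k j) x)
    (hg : ∀ k, DifferentiableAt ℝ (g k) x) :
    ∑ j, pderiv' j (fun y => ∑ k, P k j y * g k y) x =
      (∑ k, ∑ j, P k j x * pderiv' j (g k) x) + ∑ k, g k x * ∑ j, pderiv' j (P k j) x := by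
  simp only [mul_sum, ← sum_add_distrib]
  rw [sum_comm]
  refine sum_congr rfl fun j _ => ?_
  rw [pderiv'_sum j _ fun k _ => (hP k j).fun_mul (hg k)]
  exact sum_congr rfl fun k _ => pderiv'_mul j (hP k j) (hg k)

end PartialDerivative

theorem ContDiffOn.jacobian_of_isOpen {n m : ℕ} {Ω : Set (Fin n → ℝ)}
    {u : (Fin n → ℝ) → Fin m → ℝ} {r s : WithTop ℕ∞} (hu : ContDiffOn ℝ s u Ω) (hΩ : IsOpen Ω)
    (hrs : r + 1 ≤ s) :
    ContDiffOn ℝ r (fun x k j => fderiv ℝ u x (Pi.single j 1) k) Ω := by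
  have hfderiv := hu.fderiv_of_isOpen hΩ hrs
  refine contDiffOn_pi.2 fun k => contDiffOn_pi.2 fun j => ?_
  exact ((ContinuousLinearMap.proj k).contDiff.comp
    (ContinuousLinearMap.apply ℝ (Fin m → ℝ) (Pi.single j 1)).contDiff).comp_contDiffOn hfderiv

theorem DifferentiableAt.fderiv_apply_comp {E F G : Type*} [NormedAddCommGroup E]
    [NormedSpace ℝ E] [NormedAddCommGroup F] [NormedSpace ℝ F] [NormedAddCommGroup G]
    [NormedSpace ℝ G] {L : F → G} (hL : ContDiff ℝ 2 L) {w : E → F} {x : E}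
    (hw : DifferentiableAt ℝ w x) (ξ : F) :
    DifferentiableAt ℝ (fun y => fderiv ℝ L (w y) ξ) x :=
  (((hL.fderiv_right (m := 1) le_rfl).differentiable one_ne_zero (w x)).comp x hw).clm_apply
    (differentiableAt_const ξ)

/-- Noether's first theorem (first-order Lagrangian, vertical infinitesimal symmetry):
if `φ` is an infinitesimal symmetry of the Lagrangian density `L(x, y, q)` and `u` solves
the Euler–Lagrange equations on an open set `Ω`, then the Noether current
`V^j = Σ_k (∂L/∂q^k_j)(x, u, Du) φ^k(u)` is divergence free on `Ω`. -/
theorem noether_first_theorem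
    {n m : ℕ}
    (Ω : Set (Fin n → ℝ)) (hΩ : IsOpen Ω)
    (L : ((Fin n → ℝ) × (Fin m → ℝ) × (Fin m → Fin n → ℝ)) → ℝ)
    (hL : ContDiff ℝ (⊤ : ℕ∞) L)
    (φ : (Fin m → ℝ) → (Fin m → ℝ))
    (hφ : ContDiff ℝ (⊤ : ℕ∞) φ)
    -- `φ` is an infinitesimal symmetry of the Lagrangian density:
    -- Σ_k L_{y^k} φ^k + Σ_{k,j} L_{q^k_j} Σ_l (∂φ^k/∂y^l) q^l_j = 0 for all (x, y, q)
    (hsym : ∀ (x : Fin n → ℝ) (y : Fin m → ℝ) (q : Fin m → Fin n → ℝ),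
      (∑ k : Fin m, fderiv ℝ L (x, y, q) (0, Pi.single k 1, 0) * φ y k) +
      (∑ k : Fin m, ∑ j : Fin n,
        fderiv ℝ L (x, y, q) (0, 0, Pi.single k (Pi.single j 1)) *
          (∑ l : Fin m, fderiv ℝ φ y (Pi.single l 1) k * q l j)) = 0)
    (u : (Fin n → ℝ) → (Fin m → ℝ))
    (hu : ContDiffOn ℝ (⊤ : ℕ∞) u Ω)
    -- the Jacobian matrix `Du(x)`, with entries `(Du x) k j = ∂u^k/∂x^j`
    (Du : (Fin n → ℝ) → (Fin m → Fin n → ℝ))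
    (hDu : ∀ x ∈ Ω, ∀ k j, Du x k j = fderiv ℝ u x (Pi.single j 1) k)
    -- Euler–Lagrange equations on Ω:
    -- L_{y^k}(x, u, Du) = Σ_j ∂/∂x^j [ L_{q^k_j}(x, u, Du) ]
    (hEL : ∀ x ∈ Ω, ∀ k : Fin m,
      fderiv ℝ L (x, u x, Du x) (0, Pi.single k 1, 0) =
        ∑ j : Fin n, pderiv' j
          (fun x' => fderiv ℝ L (x', u x', Du x') (0, 0, Pi.single k (Pi.single j 1))) x)
    -- the Noether current V
    (V : (Fin n → ℝ) → (Fin n → ℝ))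
    (hV : ∀ x ∈ Ω, ∀ j : Fin n, V x j =
      ∑ k : Fin m,
        fderiv ℝ L (x, u x, Du x) (0, 0, Pi.single k (Pi.single j 1)) * φ (u x) k) :
    ∀ x ∈ Ω, ∑ j : Fin n, pderiv' j (fun x' => V x' j) x = 0 := by
  intro x hx
  have hΩx : Ω ∈ 𝓝 x := hΩ.mem_nhds hx
  have hDu_smooth : ContDiffOn ℝ (⊤ : ℕ∞) Du Ω :=
    (hu.jacobian_of_isOpen hΩ (by simp)).congr fun y hy => funext₂ (hDu y hy)
  have hu_diff : DifferentiableAt ℝ u x := (hu.contDiffAt hΩx).differentiableAt (by simp)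
  have hjet_diff : DifferentiableAt ℝ (fun y => (y, u y, Du y)) x :=
    differentiableAt_id.prodMk (hu_diff.prodMk ((hDu_smooth.contDiffAt hΩx).differentiableAt
      (by simp)))
  have hφ_diff : DifferentiableAt ℝ φ (u x) := (hφ.differentiable (by simp)) (u x)
  have hφu_diff : ∀ k, DifferentiableAt ℝ (fun y => φ (u y) k) x :=
    differentiableAt_pi.1 (hφ_diff.comp x hu_diff)
  have hLq_diff : ∀ k j, DifferentiableAt ℝ
      (fun y => fderiv ℝ L (y, u y, Du y) (0, 0, Pi.single k (Pi.single j 1))) x :=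
    fun k j => hjet_diff.fderiv_apply_comp (hL.of_le (WithTop.coe_le_coe.2 le_top)) _
  have hV_near : V =ᶠ[𝓝 x] fun y j => ∑ k : Fin m,
      fderiv ℝ L (y, u y, Du y) (0, 0, Pi.single k (Pi.single j 1)) * φ (u y) k :=
    eventually_of_mem hΩx fun y hy => funext (hV y hy)
  calc ∑ j, pderiv' j (fun y => V y j) x
      = ∑ j, pderiv' j (fun y => ∑ k : Fin m,
          fderiv ℝ L (y, u y, Du y) (0, 0, Pi.single k (Pi.single j 1)) * φ (u y) k) x :=
        sum_congr rfl fun j _ => pderiv'_congr_of_eventuallyEq j (hV_near.fun_comp (· j))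
    _ = (∑ k, fderiv ℝ L (x, u x, Du x) (0, Pi.single k 1, 0) * φ (u x) k) +
          ∑ k, ∑ j, fderiv ℝ L (x, u x, Du x) (0, 0, Pi.single k (Pi.single j 1)) *
            ∑ l, fderiv ℝ φ (u x) (Pi.single l 1) k * Du x l j := by
        rw [sum_pderiv'_sum_mul hLq_diff hφu_diff, add_comm]
        simp only [pderiv'_comp_apply _ hφ_diff hu_diff, hEL x hx, hDu x hx, mul_comm]
    _ = 0 := hsym x (u x) (Du x)
end

section
/- Let E : H² → ℝ be a smooth function on the upper half-plane H² = {(x,y) ∈ ℝ² : y > 0} satisfying E_xx − E_y/y − E/y² = 0, E_xy + E_x/y = 0, and E_yy + E_y/y − E/y² = 0 on all of H². Then there exist real constants a, b, c such that E(x,y) = a·(x/y) + b·(1/y) + c·(x² + y²)/y for all (x,y) ∈ H². Hence the kernel of the operator ∇d + Rg on H² is exactly the 3-dimensional real span of k₀ = x/y, k₁ = 1/y, k₂ = (x² + y²)/y. -/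
/-- Partial derivative in the first coordinate direction on `ℝ²`. -/
noncomputable def pdx (f : (ℝ × ℝ) → ℝ) (z : ℝ × ℝ) : ℝ := fderiv ℝ f z (1, 0)

/-- Partial derivative in the second coordinate direction on `ℝ²`. -/
noncomputable def pdy (f : (ℝ × ℝ) → ℝ) (z : ℝ × ℝ) : ℝ := fderiv ℝ f z (0, 1)

/-- The upper half-plane `H² = {(x, y) : y > 0}`. -/
def UHP : Set (ℝ × ℝ) := {z : ℝ × ℝ | 0 < z.2}

/-!
Put `G = y E`. The three equations say exactly that the Hessian of `G` is `(G_y / y) · Id`: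
`G_xx = G_yy = G_y / y` and `G_xy = 0`. Hence `G_y / y` is a constant `k`, so `G_x - k x` is
a constant `a`, and `G - (k (x² + y²) / 2 + a x)` is a constant `b`, because the upper
half-plane is connected.
-/

theorem isOpen_UHP : IsOpen UHP := isOpen_lt continuous_const continuous_snd

theorem isPreconnected_UHP : IsPreconnected UHP :=
  (convex_halfSpace_gt (f := Prod.snd) ⟨fun _ _ => rfl, fun _ _ => rfl⟩ 0).isPreconnected

section PartialDerivatives

variable {f g : ℝ × ℝ → ℝ} {z : ℝ × ℝ} {s : Set (ℝ × ℝ)}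

theorem fderiv_eq_of_pdx_eq_of_pdy_eq (hx : pdx f z = pdx g z) (hy : pdy f z = pdy g z) :
    fderiv ℝ f z = fderiv ℝ g z :=
  ContinuousLinearMap.prod_ext (ContinuousLinearMap.ext_ring hx)
    (ContinuousLinearMap.ext_ring hy)

theorem pdx_add (hf : DifferentiableAt ℝ f z) (hg : DifferentiableAt ℝ g z) :
    pdx (fun w => f w + g w) z = pdx f z + pdx g z := by
  simp [pdx, fderiv_fun_add hf hg]

theorem pdy_add (hf : DifferentiableAt ℝ f z) (hg : DifferentiableAt ℝ g z) :
    pdy (fun w => f w + g w) z = pdy f z + pdy g z := by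
  simp [pdy, fderiv_fun_add hf hg]

theorem pdx_snd_mul (hf : DifferentiableAt ℝ f z) :
    pdx (fun w => w.2 * f w) z = z.2 * pdx f z := by
  simp [pdx, fderiv_fun_mul differentiableAt_snd hf, fderiv_snd]

theorem pdy_snd_mul (hf : DifferentiableAt ℝ f z) :
    pdy (fun w => w.2 * f w) z = f z + z.2 * pdy f z := by
  simp [pdy, fderiv_fun_mul differentiableAt_snd hf, fderiv_snd]
  ring

theorem fderiv_inv_snd (hz : z.2 ≠ 0) (v : ℝ × ℝ) :
    fderiv ℝ (fun w : ℝ × ℝ => (w.2)⁻¹) z v = -v.2 / z.2 ^ 2 := by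
  rw [fderiv_fun_comp z (differentiableAt_inv hz) differentiableAt_snd]
  simp [fderiv_snd]
  ring

theorem DifferentiableAt.div_snd (hf : DifferentiableAt ℝ f z) (hz : z.2 ≠ 0) :
    DifferentiableAt ℝ (fun w => f w / w.2) z := by
  simpa only [div_eq_mul_inv] using hf.fun_mul (differentiableAt_snd.fun_inv hz)

theorem pdx_div_snd (hf : DifferentiableAt ℝ f z) (hz : z.2 ≠ 0) :
    pdx (fun w => f w / w.2) z = pdx f z / z.2 := by
  simp only [div_eq_mul_inv]
  rw [pdx, fderiv_fun_mul hf (differentiableAt_snd.fun_inv hz)]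
  simp [fderiv_inv_snd hz, pdx, mul_comm]

theorem pdy_div_snd (hf : DifferentiableAt ℝ f z) (hz : z.2 ≠ 0) :
    pdy (fun w => f w / w.2) z = pdy f z / z.2 - f z / z.2 ^ 2 := by
  simp only [div_eq_mul_inv]
  rw [pdy, fderiv_fun_mul hf (differentiableAt_snd.fun_inv hz)]
  simp [fderiv_inv_snd hz, pdy]
  ring

theorem ContDiffAt.differentiableAt_pdx (hf : ContDiffAt ℝ 2 f z) :
    DifferentiableAt ℝ (pdx f) z :=
  ((hf.fderiv_right (m := 1) le_rfl).differentiableAt one_ne_zero).clm_apply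
    (differentiableAt_const _)

theorem ContDiffAt.differentiableAt_pdy (hf : ContDiffAt ℝ 2 f z) :
    DifferentiableAt ℝ (pdy f) z :=
  ((hf.fderiv_right (m := 1) le_rfl).differentiableAt one_ne_zero).clm_apply
    (differentiableAt_const _)

theorem ContDiffAt.pdy_pdx_comm (hf : ContDiffAt ℝ 2 f z) :
    pdy (pdx f) z = pdx (pdy f) z := by
  have hf' := (hf.fderiv_right (m := 1) le_rfl).differentiableAt one_ne_zero
  have hcomp (v w : ℝ × ℝ) :
      fderiv ℝ (fun u => fderiv ℝ f u v) z w = fderiv ℝ (fderiv ℝ f) z w v := by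
    simp [fderiv_clm_apply hf' (differentiableAt_const v)]
  exact (hcomp _ _).trans <| (hf.isSymmSndFDerivAt (by simp) _ _).trans (hcomp _ _).symm

theorem IsOpen.exists_eq_add_of_pdx_eq_of_pdy_eq (hs : IsOpen s) (hs' : IsPreconnected s)
    (hf : DifferentiableOn ℝ f s) (hg : DifferentiableOn ℝ g s)
    (hx : ∀ z ∈ s, pdx f z = pdx g z) (hy : ∀ z ∈ s, pdy f z = pdy g z) :
    ∃ a, ∀ z ∈ s, f z = g z + a :=
  hs.exists_eq_add_of_fderiv_eq hs' hf hg fun z hz =>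
    fderiv_eq_of_pdx_eq_of_pdy_eq (hx z hz) (hy z hz)

theorem IsOpen.exists_eq_mul_snd_of_pdx_eq_zero (hs : IsOpen s) (hs' : IsPreconnected s)
    (hs₀ : ∀ z ∈ s, z.2 ≠ 0) (hf : DifferentiableOn ℝ f s)
    (hx : ∀ z ∈ s, pdx f z = 0) (hy : ∀ z ∈ s, pdy f z = f z / z.2) :
    ∃ k, ∀ z ∈ s, f z = k * z.2 := by
  have hdf (z : ℝ × ℝ) (hz : z ∈ s) : DifferentiableAt ℝ f z :=
    hf.differentiableAt (hs.mem_nhds hz)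
  obtain ⟨k, hk⟩ := hs.exists_eq_add_of_pdx_eq_of_pdy_eq hs' (f := fun w => f w / w.2)
    (g := fun _ => 0)
    (fun z hz => ((hdf z hz).div_snd (hs₀ z hz)).differentiableWithinAt)
    (differentiableOn_const 0)
    (fun z hz => by
      rw [pdx_div_snd (hdf z hz) (hs₀ z hz), hx z hz]
      simp [pdx])
    (fun z hz => by
      rw [pdy_div_snd (hdf z hz) (hs₀ z hz), hy z hz]
      simp [pdy]
      ring)
  refine ⟨k, fun z hz => ?_⟩
  have := hk z hz
  field_simp [hs₀ z hz] at this
  linarith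

theorem IsOpen.exists_eq_const_mul_fst_add (hs : IsOpen s) (hs' : IsPreconnected s)
    (hf : DifferentiableOn ℝ f s) (k : ℝ)
    (hx : ∀ z ∈ s, pdx f z = k) (hy : ∀ z ∈ s, pdy f z = 0) :
    ∃ a, ∀ z ∈ s, f z = k * z.1 + a :=
  hs.exists_eq_add_of_pdx_eq_of_pdy_eq hs' hf (by fun_prop)
    (fun z hz => by
      rw [hx z hz]
      simp (disch := fun_prop) [pdx, fderiv_fun_mul, fderiv_fst])
    (fun z hz => by
      rw [hy z hz]
      simp (disch := fun_prop) [pdy, fderiv_fun_mul, fderiv_fst])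

theorem IsOpen.exists_eq_quadratic_add (hs : IsOpen s) (hs' : IsPreconnected s)
    (hf : DifferentiableOn ℝ f s) (k a : ℝ)
    (hx : ∀ z ∈ s, pdx f z = k * z.1 + a) (hy : ∀ z ∈ s, pdy f z = k * z.2) :
    ∃ b, ∀ z ∈ s, f z = k / 2 * (z.1 ^ 2 + z.2 ^ 2) + a * z.1 + b :=
  hs.exists_eq_add_of_pdx_eq_of_pdy_eq hs' hf (by fun_prop)
    (fun z hz => by
      rw [hx z hz]
      simp (disch := fun_prop) [pdx, fderiv_fun_add, fderiv_fun_mul, fderiv_fun_pow,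
        fderiv_fst, fderiv_snd]
      ring)
    (fun z hz => by
      rw [hy z hz]
      simp (disch := fun_prop) [pdy, fderiv_fun_add, fderiv_fun_mul, fderiv_fun_pow,
        fderiv_fst, fderiv_snd]
      ring)

end PartialDerivatives

section KernelEquations

variable {E : ℝ × ℝ → ℝ} {z : ℝ × ℝ}

theorem pdx_snd_mul_pdx_eq (hE : ContDiffAt ℝ 2 E z) (hz : z.2 ≠ 0)
    (h11 : pdx (pdx E) z - pdy E z / z.2 - E z / z.2 ^ 2 = 0) :
    pdx (fun w => w.2 * pdx E w) z = (E z + z.2 * pdy E z) / z.2 := by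
  rw [pdx_snd_mul hE.differentiableAt_pdx]
  field_simp at h11 ⊢
  linarith

theorem pdy_snd_mul_pdx_eq_zero (hE : ContDiffAt ℝ 2 E z) (hz : z.2 ≠ 0)
    (h12 : pdx (pdy E) z + pdx E z / z.2 = 0) :
    pdy (fun w => w.2 * pdx E w) z = 0 := by
  rw [pdy_snd_mul hE.differentiableAt_pdx, hE.pdy_pdx_comm]
  field_simp at h12
  linarith

theorem pdx_add_snd_mul_pdy_eq_zero (hE : ContDiffAt ℝ 2 E z) (hz : z.2 ≠ 0)
    (h12 : pdx (pdy E) z + pdx E z / z.2 = 0) :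
    pdx (fun w => E w + w.2 * pdy E w) z = 0 := by
  rw [pdx_add (hE.differentiableAt two_ne_zero)
    (differentiableAt_snd.fun_mul hE.differentiableAt_pdy), pdx_snd_mul hE.differentiableAt_pdy]
  field_simp at h12
  linarith

theorem pdy_add_snd_mul_pdy_eq (hE : ContDiffAt ℝ 2 E z) (hz : z.2 ≠ 0)
    (h22 : pdy (pdy E) z + pdy E z / z.2 - E z / z.2 ^ 2 = 0) :
    pdy (fun w => E w + w.2 * pdy E w) z = (E z + z.2 * pdy E z) / z.2 := by
  rw [pdy_add (hE.differentiableAt two_ne_zero)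
    (differentiableAt_snd.fun_mul hE.differentiableAt_pdy), pdy_snd_mul hE.differentiableAt_pdy]
  field_simp at h22 ⊢
  linarith

end KernelEquations

/-- Any smooth function on the upper half-plane in the kernel of `∇d + Rg` for the
hyperbolic metric (`R = −1`), i.e. satisfying `E_xx − E_y/y − E/y² = 0`,
`E_xy + E_x/y = 0`, `E_yy + E_y/y − E/y² = 0`, is a real linear combination of
`k₀ = x/y`, `k₁ = 1/y`, `k₂ = (x² + y²)/y`; hence the kernel of `∇d + Rg` is exactly
the 3-dimensional real span of `k₀, k₁, k₂`. -/
theorem kernel_nabla_d_Rg_is_span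
    (E : (ℝ × ℝ) → ℝ)
    (hE : ContDiffOn ℝ (⊤ : ℕ∞) E UHP)
    (h11 : ∀ z ∈ UHP, pdx (fun w => pdx E w) z - pdy E z / z.2 - E z / z.2 ^ 2 = 0)
    (h12 : ∀ z ∈ UHP, pdx (fun w => pdy E w) z + pdx E z / z.2 = 0)
    (h22 : ∀ z ∈ UHP, pdy (fun w => pdy E w) z + pdy E z / z.2 - E z / z.2 ^ 2 = 0) :
    ∃ a b c : ℝ, ∀ z ∈ UHP,
      E z = a * (z.1 / z.2) + b * (1 / z.2) + c * ((z.1 ^ 2 + z.2 ^ 2) / z.2) := by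
  have hE2 (z : ℝ × ℝ) (hz : z ∈ UHP) : ContDiffAt ℝ 2 E z :=
    (hE.contDiffAt (isOpen_UHP.mem_nhds hz)).of_le (by norm_cast)
  have hEd (z : ℝ × ℝ) (hz : z ∈ UHP) : DifferentiableAt ℝ E z :=
    (hE2 z hz).differentiableAt two_ne_zero
  have hz₀ (z : ℝ × ℝ) (hz : z ∈ UHP) : z.2 ≠ 0 := ne_of_gt hz
  obtain ⟨k, hk⟩ : ∃ k, ∀ z ∈ UHP, E z + z.2 * pdy E z = k * z.2 :=
    isOpen_UHP.exists_eq_mul_snd_of_pdx_eq_zero isPreconnected_UHP hz₀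
      (fun z hz => ((hEd z hz).fun_add <|
        differentiableAt_snd.fun_mul (hE2 z hz).differentiableAt_pdy).differentiableWithinAt)
      (fun z hz => pdx_add_snd_mul_pdy_eq_zero (hE2 z hz) (hz₀ z hz) (h12 z hz))
      (fun z hz => pdy_add_snd_mul_pdy_eq (hE2 z hz) (hz₀ z hz) (h22 z hz))
  obtain ⟨a, ha⟩ : ∃ a, ∀ z ∈ UHP, z.2 * pdx E z = k * z.1 + a :=
    isOpen_UHP.exists_eq_const_mul_fst_add isPreconnected_UHP
      (fun z hz =>
        (differentiableAt_snd.fun_mul (hE2 z hz).differentiableAt_pdx).differentiableWithinAt) k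
      (fun z hz => by
        rw [pdx_snd_mul_pdx_eq (hE2 z hz) (hz₀ z hz) (h11 z hz), hk z hz,
          mul_div_cancel_right₀ _ (hz₀ z hz)])
      (fun z hz => pdy_snd_mul_pdx_eq_zero (hE2 z hz) (hz₀ z hz) (h12 z hz))
  obtain ⟨b, hb⟩ :
      ∃ b, ∀ z ∈ UHP, z.2 * E z = k / 2 * (z.1 ^ 2 + z.2 ^ 2) + a * z.1 + b :=
    isOpen_UHP.exists_eq_quadratic_add isPreconnected_UHP
      (fun z hz => (differentiableAt_snd.fun_mul (hEd z hz)).differentiableWithinAt) k a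
      (fun z hz => (pdx_snd_mul (hEd z hz)).trans (ha z hz))
      (fun z hz => (pdy_snd_mul (hEd z hz)).trans (hk z hz))
  refine ⟨a, b, k / 2, fun z hz => ?_⟩
  field_simp [hz₀ z hz]
  linarith [hb z hz]
end

section
/- Let S be a smooth symmetric 2-tensor field on the upper half-plane H² = {(x,y) ∈ ℝ² : y > 0}, with components S₁₁, S₁₂ = S₂₁, S₂₂. Then S is covariantly divergence free for the hyperbolic metric, i.e. ∇₁S_{1j} + ∇₂S_{2j} = 0 on H² for j = 1, 2 where ∇_k S_{ij} = ∂_k S_{ij} − Γ^l_{ki} S_{lj} − Γ^l_{kj} S_{il}, if and only if for each of the three Killing fields ω ∈ {x∂_x + y∂_y, ∂_x, (x² − y²)∂_x + 2xy∂_y}, writing ω = a∂_x + b∂_y, the 1-form *(S, ω) is closed, i.e. ∂_x(S₁₁ a + S₁₂ b) + ∂_y(S₂₁ a + S₂₂ b) = 0 on H². -/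
/-- Partial derivative in the `i`-th coordinate direction on `ℝ²`. -/
noncomputable def pd (i : Fin 2) (f : (ℝ × ℝ) → ℝ) (z : ℝ × ℝ) : ℝ :=
  fderiv ℝ f z (![((1 : ℝ), (0 : ℝ)), ((0 : ℝ), (1 : ℝ))] i)

/-- The Christoffel symbols `Γ^l_{ki}` of the hyperbolic metric `y⁻²(dx² + dy²)`:
`Γ¹₁₂ = Γ¹₂₁ = −1/y`, `Γ²₁₁ = 1/y`, `Γ²₂₂ = −1/y`, all others zero. -/
noncomputable def hypChristoffel (l k i : Fin 2) (z : ℝ × ℝ) : ℝ :=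
  ![![![0, -1 / z.2], ![-1 / z.2, 0]], ![![1 / z.2, 0], ![0, -1 / z.2]]] l k i

/-- The covariant derivative `∇_k S_{ij} = ∂_k S_{ij} − Γ^l_{ki} S_{lj} − Γ^l_{kj} S_{il}`
of a 2-tensor `S` for the hyperbolic metric on the upper half-plane. -/
noncomputable def covDeriv (S : (ℝ × ℝ) → Fin 2 → Fin 2 → ℝ) (k i j : Fin 2)
    (z : ℝ × ℝ) : ℝ :=
  pd k (fun w => S w i j) z - (∑ l : Fin 2, hypChristoffel l k i z * S z l j)
    - ∑ l : Fin 2, hypChristoffel l k j z * S z i l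

/-- The three Killing fields `ω₀ = x∂_x + y∂_y`, `ω₁ = ∂_x`,
`ω₂ = (x² − y²)∂_x + 2xy∂_y` of the hyperbolic metric on the upper half-plane. -/
noncomputable def killingField : Fin 3 → (ℝ × ℝ) → ℝ × ℝ :=
  ![fun z => (z.1, z.2), fun _ => ((1 : ℝ), (0 : ℝ)),
    fun z => (z.1 ^ 2 - z.2 ^ 2, 2 * z.1 * z.2)]

section PartialDerivatives

variable {f g : ℝ × ℝ → ℝ} {z : ℝ × ℝ}

theorem pd_add (hf : DifferentiableAt ℝ f z) (hg : DifferentiableAt ℝ g z) (i : Fin 2) :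
    pd i (fun w => f w + g w) z = pd i f z + pd i g z := by
  simp only [pd, fderiv_fun_add hf hg, add_apply]

theorem pd_mul (hf : DifferentiableAt ℝ f z) (hg : DifferentiableAt ℝ g z) (i : Fin 2) :
    pd i (fun w => f w * g w) z = pd i f z * g z + f z * pd i g z := by
  simp only [pd, fderiv_fun_mul hf hg, add_apply, smul_apply, smul_eq_mul]
  ring

theorem pd_zero_eq_deriv (hf : DifferentiableAt ℝ f z) :
    pd 0 f z = deriv (fun t => f (t, z.2)) z.1 := by
  have hline : HasDerivAt (fun t : ℝ => (t, z.2)) ((1 : ℝ), (0 : ℝ)) z.1 :=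
    (hasDerivAt_id _).prodMk (hasDerivAt_const _ _)
  exact (hf.hasFDerivAt.comp_hasDerivAt z.1 hline).deriv.symm

theorem pd_one_eq_deriv (hf : DifferentiableAt ℝ f z) :
    pd 1 f z = deriv (fun t => f (z.1, t)) z.2 := by
  have hline : HasDerivAt (fun t : ℝ => (z.1, t)) ((0 : ℝ), (1 : ℝ)) z.2 :=
    (hasDerivAt_const _ _).prodMk (hasDerivAt_id _)
  exact (hf.hasFDerivAt.comp_hasDerivAt z.2 hline).deriv.symm

end PartialDerivatives

section Divergence

variable {S : ℝ × ℝ → Fin 2 → Fin 2 → ℝ} {z : ℝ × ℝ}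

theorem pd_contract_add_pd_contract {a b : ℝ × ℝ → ℝ}
    (hS : ∀ i j, DifferentiableAt ℝ (fun w => S w i j) z)
    (ha : DifferentiableAt ℝ a z) (hb : DifferentiableAt ℝ b z) :
    pd 0 (fun w => S w 0 0 * a w + S w 0 1 * b w) z +
      pd 1 (fun w => S w 1 0 * a w + S w 1 1 * b w) z =
    a z * (pd 0 (fun w => S w 0 0) z + pd 1 (fun w => S w 1 0) z) +
      b z * (pd 0 (fun w => S w 0 1) z + pd 1 (fun w => S w 1 1) z) +
      (S z 0 0 * pd 0 a z + S z 0 1 * pd 0 b z + S z 1 0 * pd 1 a z + S z 1 1 * pd 1 b z) := by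
  rw [pd_add ((hS 0 0).fun_mul ha) ((hS 0 1).fun_mul hb),
    pd_add ((hS 1 0).fun_mul ha) ((hS 1 1).fun_mul hb),
    pd_mul (hS 0 0) ha, pd_mul (hS 0 1) hb, pd_mul (hS 1 0) ha, pd_mul (hS 1 1) hb]
  ring

variable (S z)

theorem covDeriv_contract_zero :
    covDeriv S 0 0 0 z + covDeriv S 1 1 0 z =
      pd 0 (fun w => S w 0 0) z + pd 1 (fun w => S w 1 0) z + (S z 1 0 - S z 0 1) / z.2 := by
  simp only [covDeriv, hypChristoffel, Fin.sum_univ_two, Matrix.cons_val_zero,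
    Matrix.cons_val_one]
  ring

theorem covDeriv_contract_one :
    covDeriv S 0 0 1 z + covDeriv S 1 1 1 z =
      pd 0 (fun w => S w 0 1) z + pd 1 (fun w => S w 1 1) z + (S z 0 0 + S z 1 1) / z.2 := by
  simp only [covDeriv, hypChristoffel, Fin.sum_univ_two, Matrix.cons_val_zero,
    Matrix.cons_val_one]
  ring

end Divergence

/-- `L_ω g = 0` for `g = y⁻²(dx² + dy²)` and `ω = a∂_x + b∂_y`, with the diagonal components
multiplied by `y³/2` and the off-diagonal one by `y²`. -/
def IsHypKillingAt (ω : ℝ × ℝ → ℝ × ℝ) (z : ℝ × ℝ) : Prop :=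
  z.2 * pd 0 (fun w => (ω w).1) z = (ω z).2 ∧
    z.2 * pd 1 (fun w => (ω w).2) z = (ω z).2 ∧
    pd 1 (fun w => (ω w).1) z + pd 0 (fun w => (ω w).2) z = 0

theorem differentiable_killingField (α : Fin 3) : Differentiable ℝ (killingField α) := by
  fin_cases α <;>
    simp only [killingField, Fin.zero_eta, Fin.mk_one, Fin.reduceFinMk, Fin.isValue, Matrix.cons_val] <;>
    fun_prop

theorem isHypKillingAt_killingField (α : Fin 3) (z : ℝ × ℝ) :
    IsHypKillingAt (killingField α) z := by
  have hω := differentiable_killingField α z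
  unfold IsHypKillingAt
  rw [pd_zero_eq_deriv hω.fst, pd_one_eq_deriv hω.snd, pd_one_eq_deriv hω.fst,
    pd_zero_eq_deriv hω.snd]
  fin_cases α <;> simp [killingField, mul_comm]

theorem pd_noetherForm_eq {S : ℝ × ℝ → Fin 2 → Fin 2 → ℝ} {ω : ℝ × ℝ → ℝ × ℝ} {z : ℝ × ℝ}
    (hz : z.2 ≠ 0) (hsymm : S z 0 1 = S z 1 0)
    (hS : ∀ i j, DifferentiableAt ℝ (fun w => S w i j) z) (hω : DifferentiableAt ℝ ω z)
    (hK : IsHypKillingAt ω z) :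
    pd 0 (fun w => S w 0 0 * (ω w).1 + S w 0 1 * (ω w).2) z +
      pd 1 (fun w => S w 1 0 * (ω w).1 + S w 1 1 * (ω w).2) z =
    (ω z).1 * (covDeriv S 0 0 0 z + covDeriv S 1 1 0 z) +
      (ω z).2 * (covDeriv S 0 0 1 z + covDeriv S 1 1 1 z) := by
  obtain ⟨hxx, hyy, hxy⟩ := hK
  rw [pd_contract_add_pd_contract hS hω.fst hω.snd, covDeriv_contract_zero,
    covDeriv_contract_one, hsymm]
  field_simp
  linear_combination S z 0 0 * hxx + S z 1 1 * hyy + z.2 * S z 1 0 * hxy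

theorem pd_noetherForm_killingField_eq {S : ℝ × ℝ → Fin 2 → Fin 2 → ℝ} {z : ℝ × ℝ}
    (hz : z.2 ≠ 0) (hsymm : S z 0 1 = S z 1 0)
    (hS : ∀ i j, DifferentiableAt ℝ (fun w => S w i j) z) (α : Fin 3) :
    pd 0 (fun w => S w 0 0 * (killingField α w).1 + S w 0 1 * (killingField α w).2) z +
      pd 1 (fun w => S w 1 0 * (killingField α w).1 + S w 1 1 * (killingField α w).2) z =
    (killingField α z).1 * (covDeriv S 0 0 0 z + covDeriv S 1 1 0 z) +
      (killingField α z).2 * (covDeriv S 0 0 1 z + covDeriv S 1 1 1 z) :=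
  pd_noetherForm_eq hz hsymm hS (differentiable_killingField α z)
    (isHypKillingAt_killingField α z)

/-- A smooth symmetric 2-tensor `S` on the upper half-plane is covariantly divergence
free for the hyperbolic metric (`∇₁S_{1j} + ∇₂S_{2j} = 0` for `j = 1, 2`) iff for each
of the three Killing fields `ω = a∂_x + b∂_y` the 1-form `*(S, ω)` is closed, i.e.
`∂_x(S₁₁a + S₁₂b) + ∂_y(S₂₁a + S₂₂b) = 0`. -/
theorem div_free_iff_noether_forms_closed
    (S : (ℝ × ℝ) → Fin 2 → Fin 2 → ℝ)
    (hsymm : ∀ z ∈ UHP, ∀ i j, S z i j = S z j i)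
    (hsmooth : ∀ i j, ContDiffOn ℝ (⊤ : ℕ∞) (fun z => S z i j) UHP) :
    (∀ z ∈ UHP, ∀ j : Fin 2, covDeriv S 0 0 j z + covDeriv S 1 1 j z = 0) ↔
    (∀ α : Fin 3, ∀ z ∈ UHP,
      pd 0 (fun w => S w 0 0 * (killingField α w).1 + S w 0 1 * (killingField α w).2) z +
      pd 1 (fun w => S w 1 0 * (killingField α w).1 + S w 1 1 * (killingField α w).2) z
        = 0) := by
  have noether (z : ℝ × ℝ) (hz : z ∈ UHP) :=
    pd_noetherForm_killingField_eq (ne_of_gt hz) (hsymm z hz 0 1) fun i j =>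
      ((hsmooth i j).differentiableOn (by simp)).differentiableAt (isOpen_UHP.mem_nhds hz)
  constructor
  · intro hdiv α z hz
    rw [noether z hz, hdiv z hz 0, hdiv z hz 1]
    ring
  · intro hclosed z hz
    have h_dx := (noether z hz 1).symm.trans (hclosed 1 z hz)
    have h_euler := (noether z hz 0).symm.trans (hclosed 0 z hz)
    simp only [killingField, Matrix.cons_val_zero, Matrix.cons_val_one, one_mul, zero_mul,
      add_zero] at h_dx h_euler
    rw [h_dx, mul_zero, zero_add] at h_euler
    intro j
    fin_cases j
    · exact h_dx
    · exact (mul_eq_zero.mp h_euler).resolve_left (ne_of_gt hz)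
end
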